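/- arXiv:math/0110077 — 2 statements merged into one kernel-verified Lean document; each statement's English description precedes it below -/
import Mathlib

section
/- For all integers p, q ≥ 0 and every n ≥ p + q + 2, the following identity of polynomials in x₁,…,xₙ holds: s*_{(p+1|q)} + s*_{(p|q+1)} + (p+q+1)·s*_{(p|q)} = s*_{(p|0)} · s*_{(0|q)}. -/
open Finset

noncomputable section

/-- `μ : ℕ → ℕ` (0-indexed: `μ i` is the `(i+1)`-st part) is a partition. -/
def IsPartition (μ : ℕ → ℕ) : Prop := Antitone μ ∧ ∃ N, ∀ i, N ≤ i → μ i = 0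

/-- number of boxes `|μ|` -/
def psize (μ : ℕ → ℕ) : ℕ := Nat.card {p : ℕ × ℕ // p.2 < μ p.1}

/-- number of nonzero parts `ℓ(μ)` -/
def plen (μ : ℕ → ℕ) : ℕ := Nat.card {i : ℕ // 0 < μ i}

/-- conjugate partition (0-indexed) -/
def conjP (μ : ℕ → ℕ) : ℕ → ℕ := fun j => Nat.card {i : ℕ // j < μ i}

/-- depth `d(μ)`: the number of `i ≥ 1` (1-indexed) with `μᵢ ≥ i` -/
def depth (μ : ℕ → ℕ) : ℕ := Nat.card {i : ℕ // i < μ i}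

/-- containment of Young diagrams -/
def subP (μ ν : ℕ → ℕ) : Prop := ∀ i, μ i ≤ ν i

/-- `dim(μ,ν)`: number of saturated chains `μ = λ⁰ ⊂ λ¹ ⊂ ⋯ ⊂ λᵏ = ν`,
  `k = |ν| - |μ|`, `|λᵗ| = |μ| + t`. -/
def relDim (μ ν : ℕ → ℕ) : ℕ :=
  Nat.card {c : Fin (psize ν - psize μ + 1) → (ℕ → ℕ) //
    c 0 = μ ∧ c (Fin.last _) = ν ∧ (∀ t, IsPartition (c t)) ∧
    ∀ t : Fin (psize ν - psize μ),
      subP (c t.castSucc) (c t.succ) ∧ psize (c t.succ) = psize (c t.castSucc) + 1}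

/-- `dim ν` : number of standard tableaux of shape `ν` -/
def dimP (ν : ℕ → ℕ) : ℕ := relDim (fun _ => 0) ν

/-- the hook partition `(p|q) = (p+1, 1^q)` -/
def hookP (p q : ℕ) : ℕ → ℕ := fun i => if i = 0 then p + 1 else if i ≤ q then 1 else 0

/-- Frobenius coordinate `pᵢ = μᵢ - i` (0-indexed input `i`) -/
def frobP (μ : ℕ → ℕ) (i : ℕ) : ℕ := μ i - (i + 1)
/-- Frobenius coordinate `qᵢ = μ'ᵢ - i` (0-indexed input `i`) -/
def frobQ (μ : ℕ → ℕ) (i : ℕ) : ℕ := conjP μ i - (i + 1)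

/-- the ring of polynomials in `x₁,…,xₙ, y₁,…,yₙ` over `ℂ` -/
abbrev SSRing (n : ℕ) := MvPolynomial (Fin n ⊕ Fin n) ℂ

/-- the power series `1/∏_{i=1}^{k}(1 - cᵢ t)` (inverse computed via `invOfUnit`) -/
def denomInv (R : Type*) [CommRing R] (c : ℕ → R) (k : ℕ) : PowerSeries R :=
  PowerSeries.invOfUnit (∏ i ∈ Finset.range k, (1 - PowerSeries.C (R := R) (c i) * PowerSeries.X)) 1

/-- the power series `∏_{i=1}^{n} (1 + yᵢ t)/(1 - xᵢ t)` -/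
def hGenSeries (n : ℕ) : PowerSeries (SSRing n) :=
  (∏ i : Fin n, (1 + PowerSeries.C (R := SSRing n) (MvPolynomial.X (Sum.inr i)) * PowerSeries.X)) *
    PowerSeries.invOfUnit
      (∏ i : Fin n, (1 - PowerSeries.C (R := SSRing n) (MvPolynomial.X (Sum.inl i)) * PowerSeries.X)) 1

/-- `h` is the family of multiparameter complete homogeneous supersymmetric polynomials:
`h a k = h_{k;a}(x₁,…,xₙ;y₁,…,yₙ)`, characterized by `h_{k;a} = 0` for `k < 0`, `h_{0;a} = 1`, and
`∏_{i=1}^n (1+yᵢt)/(1-xᵢt) = ∑_{k≥0} h_{k;a} tᵏ/∏_{i=1}^k (1-aᵢt)` (an identity of formal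
power series in `t`, stated coefficientwise). -/
def IsH (n : ℕ) (h : (ℤ → ℂ) → ℤ → SSRing n) : Prop :=
  (∀ (a : ℤ → ℂ) (k : ℤ), k < 0 → h a k = 0) ∧ (∀ a, h a 0 = 1) ∧
  ∀ a : ℤ → ℂ, hGenSeries n = PowerSeries.mk (fun N =>
    ∑ k ∈ Finset.range (N + 1),
      h a k * PowerSeries.coeff (N - k)
        (denomInv (SSRing n) (fun i => MvPolynomial.C (a ((i : ℤ) + 1))) k))

/-- shift of a parameter sequence: `(τʳ a)ᵢ = a_{i+r}` -/
def tauSeq (a : ℤ → ℂ) (r : ℤ) : ℤ → ℂ := fun i => a (i + r)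

/-- dual sequence `âᵢ = -a_{-i+1}` -/
def adual (a : ℤ → ℂ) : ℤ → ℂ := fun i => -a (1 - i)

/-- the multiparameter Schur polynomial `s_{μ;a} = det[h_{μᵢ-i+j; τ^{1-j}a}]_{1≤i,j≤ℓ(μ)}` -/
def schurDet {n : ℕ} (h : (ℤ → ℂ) → ℤ → SSRing n) (a : ℤ → ℂ) (μ : ℕ → ℕ) : SSRing n :=
  Matrix.det (Matrix.of fun i j : Fin (plen μ) =>
    h (tauSeq a (-(j : ℕ) : ℤ)) ((μ (i : ℕ) : ℤ) - (i : ℕ) + (j : ℕ)))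

/-- the Frobenius-Schur sequence `aᵢ = i - 1/2` -/
def aFS : ℤ → ℂ := fun i => (i : ℂ) - 1/2


/-- falling factorial power of a polynomial: `p^{↓m} = p(p-1)⋯(p-m+1)` -/
def ffpoly {n : ℕ} (p : MvPolynomial (Fin n) ℚ) (m : ℕ) : MvPolynomial (Fin n) ℚ :=
  ∏ t ∈ Finset.range m, (p - (t : ℕ))

/-- the shifted Schur polynomial `s*_μ(x₁,…,xₙ)`, as an element of the fraction field of
`ℚ[x₁,…,xₙ]`: `det[(xᵢ+n-i)^{↓(μⱼ+n-j)}] / det[(xᵢ+n-i)^{↓(n-j)}]`, `1 ≤ i,j ≤ n`. -/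
def sstarFrac (n : ℕ) (μ : ℕ → ℕ) : FractionRing (MvPolynomial (Fin n) ℚ) :=
  algebraMap (MvPolynomial (Fin n) ℚ) _
      (Matrix.det (Matrix.of fun i j : Fin n =>
        ffpoly (MvPolynomial.X i + MvPolynomial.C ((n : ℚ) - 1 - ((i : ℕ) : ℚ)))
          (μ (j : ℕ) + (n - 1 - (j : ℕ))))) /
    algebraMap (MvPolynomial (Fin n) ℚ) _
      (Matrix.det (Matrix.of fun i j : Fin n =>
        ffpoly (MvPolynomial.X i + MvPolynomial.C ((n : ℚ) - 1 - ((i : ℕ) : ℚ)))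
          (n - 1 - (j : ℕ))))


/-!
Write `z_i = x_i + n - i`, so that `s*_μ = a_{μ+δ} / a_δ` with `a_e = det [z_i^{↓e_j}]`.
Since `z · z^{↓m} = z^{↓(m+1)} + m z^{↓m}`, multiplying `a_{μ+δ}` by `z_1 + ⋯ + z_n` adds a box
to `μ` in every possible way, up to the multiple `|μ + δ| a_{μ+δ}`. For `μ = ∅` this gives
`s*_{(0|0)} = ∑ z_i - |δ|`; for `μ = (p|q)` the boxes can go to `(p+1|q)`, `(p|q+1)` and, when
`q > 0`, to `(p + 1, 2, 1^(q-1))`. The last term is eliminated by the Giambelli identity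
`s*_{(p,0|q,0)} = s*_{(p|q)} s*_{(0|0)} - s*_{(p|0)} s*_{(0|q)}`, an instance of a
Grassmann–Plücker relation between determinants.
-/

open Matrix Function

namespace Matrix

variable {R : Type*} [CommRing R]

theorem sum_det_updateCol_diagonal_mul {ι : Type*} [Fintype ι] [DecidableEq ι]
    (A : Matrix ι ι R) (z : ι → R) :
    ∑ j, (A.updateCol j fun i => z i * A i j).det = (∑ i, z i) * A.det := by
  have hcol (j : ι) (w : ι → R) : (A.updateCol j w).det = ∑ i, A.adjugate j i * w i := by
    rw [← cramer_apply, cramer_eq_adjugate_mulVec]; rfl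
  simp_rw [hcol, Finset.sum_mul]
  rw [Finset.sum_comm]
  refine Finset.sum_congr rfl fun i _ => ?_
  have hdiag : ∑ j, A i j * A.adjugate j i = A.det := by
    simpa [mul_apply] using congr_fun (congr_fun (mul_adjugate A) i) i
  rw [← hdiag, Finset.mul_sum]
  exact Finset.sum_congr rfl fun j _ => by ring

/-- A Grassmann–Plücker relation: expand along the last row the determinant of the
`(n+1) × (n+1)` matrix with columns `v k` completed by `det (B.updateCol r (v k))`,
a row that is a linear combination of the others. -/
theorem sum_det_succAbove_mul_det_updateCol {n : ℕ} (v : Fin (n + 1) → Fin n → R)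
    (B : Matrix (Fin n) (Fin n) R) (r : Fin n) :
    ∑ k : Fin (n + 1),
      (-1) ^ (k : ℕ) * (of fun i j => v (k.succAbove j) i).det * (B.updateCol r (v k)).det
      = 0 := by
  have hcol (k : Fin (n + 1)) : (B.updateCol r (v k)).det = ∑ i, B.adjugate r i * v k i := by
    rw [← cramer_apply, cramer_eq_adjugate_mulVec]; rfl
  let c : Fin (n + 1) → R := Fin.snoc (α := fun _ => R) (fun i => B.adjugate r i) 0
  let T₀ : Matrix (Fin (n + 1)) (Fin (n + 1)) R :=
    of fun i k => Fin.snoc (α := fun _ => R) (v k) 0 i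
  let T := T₀.updateRow (Fin.last n) (∑ i, c i • T₀ i)
  have hT : T.det = 0 := by simp [T, det_updateRow_sum, c]
  rw [det_succ_row T (Fin.last n)] at hT
  rw [← neg_one_pow_mul_eq_zero_iff (n := n), ← hT, Finset.mul_sum]
  refine Finset.sum_congr rfl fun k _ => ?_
  have hlast : T (Fin.last n) k = (B.updateCol r (v k)).det := by
    simp [T, T₀, c, hcol, Fin.sum_univ_castSucc]
  have hminor : T.submatrix (Fin.last n).succAbove k.succAbove
      = of fun i j => v (k.succAbove j) i := by
    ext i j
    simp [T, T₀, Fin.succAbove_last]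
  rw [hlast, hminor, Fin.val_last, pow_add]
  ring

end Matrix

section Alternant

variable {R : Type*} [CommRing R] {n : ℕ}

def ffMatrix (z : Fin n → R) (e : ℕ → ℕ) : Matrix (Fin n) (Fin n) R :=
  of fun i j => (descPochhammer R (e j)).eval (z i)

def ffAlternant (z : Fin n → R) (e : ℕ → ℕ) : R := (ffMatrix z e).det

theorem updateCol_ffMatrix (z : Fin n → R) (e : ℕ → ℕ) (j : Fin n) (m : ℕ) :
    (ffMatrix z e).updateCol j (fun i => (descPochhammer R m).eval (z i))
      = ffMatrix z (update e j m) := by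
  ext i k
  by_cases hk : k = j
  · simp [ffMatrix, hk]
  · simp [ffMatrix, hk, update_of_ne (Fin.val_injective.ne hk)]

theorem ffAlternant_eq_zero_of_eq (z : Fin n → R) {e : ℕ → ℕ} {j j' : ℕ} (hj : j < n)
    (hj' : j' < n) (hne : j ≠ j') (he : e j = e j') : ffAlternant z e = 0 :=
  det_zero_of_column_eq (i := ⟨j, hj⟩) (j := ⟨j', hj'⟩) (by simpa using hne)
    fun i => by simp [ffMatrix, he]

/-- Multiplying by `z_1 + ⋯ + z_n` raises each exponent in turn, because
`z · z^{↓m} = z^{↓(m+1)} + m z^{↓m}`. -/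
theorem sum_mul_ffAlternant (z : Fin n → R) (e : ℕ → ℕ) :
    (∑ i, z i) * ffAlternant z e
      = ∑ j ∈ range n, ffAlternant z (update e j (e j + 1))
        + (∑ j ∈ range n, (e j : R)) * ffAlternant z e := by
  have hterm (j : Fin n) : ((ffMatrix z e).updateCol j fun i => z i * ffMatrix z e i j).det
      = ffAlternant z (update e j (e j + 1)) + (e j : R) * ffAlternant z e := by
    have hcol : (fun i => z i * ffMatrix z e i j)
        = (fun i => (descPochhammer R (e j + 1)).eval (z i))
          + (e j : R) • fun i => (descPochhammer R (e j)).eval (z i) := by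
      funext i
      simp only [ffMatrix, of_apply, descPochhammer_succ_eval, Pi.add_apply, Pi.smul_apply,
        smul_eq_mul]
      ring
    have hself : (ffMatrix z e).updateCol j (fun i => (descPochhammer R (e j)).eval (z i))
        = ffMatrix z e := updateCol_eq_self _ _
    rw [hcol, det_updateCol_add, det_updateCol_smul, updateCol_ffMatrix, hself, ffAlternant,
      ffAlternant]
  have hsum := sum_det_updateCol_diagonal_mul (ffMatrix z e) z
  rw [← ffAlternant] at hsum
  rw [← hsum, Finset.sum_congr rfl fun j _ => hterm j, Finset.sum_add_distrib, ← Finset.sum_mul,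
    Fin.sum_univ_eq_sum_range (fun j => ffAlternant z (update e j (e j + 1))),
    Fin.sum_univ_eq_sum_range (fun j => (e j : R))]

theorem sum_ffAlternant_succAbove (z : Fin n → R) (g e : ℕ → ℕ) {r : ℕ} (hr : r < n) :
    ∑ k ∈ range (n + 1), (-1) ^ k * ffAlternant z (fun j => g (if j < k then j else j + 1))
      * ffAlternant z (update e r (g k)) = 0 := by
  rw [← sum_det_succAbove_mul_det_updateCol (fun k i => (descPochhammer R (g k)).eval (z i))
    (ffMatrix z e) ⟨r, hr⟩, ← Fin.sum_univ_eq_sum_range]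
  refine Finset.sum_congr rfl fun k _ => ?_
  have hsucc (j : Fin n) : ((k.succAbove j : Fin (n + 1)) : ℕ)
      = if (j : ℕ) < k then (j : ℕ) else (j : ℕ) + 1 := by
    unfold Fin.succAbove; split_ifs <;> simp_all [Fin.lt_def]
  rw [updateCol_ffMatrix]
  simp only [ffAlternant, ffMatrix, hsucc]

end Alternant

section SchurNumerator

variable {R : Type*} [CommRing R] {n : ℕ} (z : Fin n → R)

/-- `a_{μ+δ}(z)` with `δ = (n-1, …, 1, 0)`: the numerator of `s*_μ` when
`z_i = x_i + n - i`. -/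
def schurNumerator (z : Fin n → R) (μ : ℕ → ℕ) : R :=
  ffAlternant z fun j => μ j + (n - 1 - j)

theorem schurNumerator_zero_ne_zero [IsDomain R] {z : Fin n → R} (hz : Injective z) :
    schurNumerator z 0 ≠ 0 := by
  have hrev : ffMatrix z (fun j => (0 : ℕ → ℕ) j + (n - 1 - j))
      = (of fun i j : Fin n => (descPochhammer R j).eval (z i)).submatrix id Fin.revPerm := by
    ext i j
    simp only [ffMatrix, Pi.zero_apply, zero_add, of_apply, submatrix_apply, id_eq,
      Fin.revPerm_apply, Fin.val_rev]
    congr 2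
    omega
  rw [schurNumerator, ffAlternant, hrev, det_permute',
    ← det_eval_matrixOfPolynomials_eq_det_vandermonde z _
      (fun j => descPochhammer_natDegree R j) (fun j => monic_descPochhammer R j)]
  refine mul_ne_zero ?_ (det_vandermonde_ne_zero_iff.mpr hz)
  rcases Int.units_eq_one_or (Equiv.Perm.sign (Fin.revPerm : Equiv.Perm (Fin n))) with h | h <;>
    simp [h]

theorem schurNumerator_update_eq_zero (μ : ℕ → ℕ) {j : ℕ} (hj : 0 < j) (hjn : j < n)
    (hμ : μ (j - 1) = μ j) : schurNumerator z (update μ j (μ j + 1)) = 0 :=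
  ffAlternant_eq_zero_of_eq z (j := j - 1) (j' := j) (by omega) hjn (by omega) (by
    simp only [update_of_ne (show j - 1 ≠ j by omega), update_self, hμ]
    omega)

/-- A box added in a row `j ∉ S` does not give a partition, and such terms vanish. -/
theorem sum_mul_schurNumerator (μ : ℕ → ℕ) (S : Finset ℕ) (hS : S ⊆ range n)
    (hcorner : ∀ j ∈ range n, j ∉ S → 0 < j ∧ μ (j - 1) = μ j) :
    (∑ i, z i) * schurNumerator z μ
      = ∑ j ∈ S, schurNumerator z (update μ j (μ j + 1))
        + (∑ j ∈ range n, (μ j : R) + ∑ j ∈ range n, ((n - 1 - j : ℕ) : R))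
          * schurNumerator z μ := by
  have hbump (j : ℕ) : update (fun j' => μ j' + (n - 1 - j')) j (μ j + (n - 1 - j) + 1)
      = fun j' => update μ j (μ j + 1) j' + (n - 1 - j') := by
    funext j'
    by_cases h : j' = j
    · subst h; simp only [update_self]; omega
    · simp only [update_of_ne h]
  rw [schurNumerator, sum_mul_ffAlternant]
  simp only [hbump, Nat.cast_add, Finset.sum_add_distrib]
  congr 1
  refine (Finset.sum_subset hS fun j hj hjS => ?_).symm
  obtain ⟨hj0, hμ⟩ := hcorner j hj hjS
  exact schurNumerator_update_eq_zero z μ hj0 (Finset.mem_range.mp hj) hμ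

theorem sum_range_hookP (p : ℕ) {q : ℕ} (hq : q < n) :
    ∑ j ∈ range n, hookP p q j = p + q + 1 := by
  induction n, hq using Nat.le_induction with
  | base =>
    have hone : ∀ i ∈ range q, hookP p q (i + 1) = 1 := fun i hi => by
      simp only [hookP, Finset.mem_range, Nat.add_one_ne_zero, if_false] at hi ⊢
      split_ifs <;> omega
    rw [Finset.sum_range_succ', Finset.sum_congr rfl hone]
    simp only [sum_const, card_range, smul_eq_mul, mul_one, hookP, ↓reduceIte]
    omega
  | succ m hm ih =>
    rw [Finset.sum_range_succ, ih]
    simp only [hookP]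
    split_ifs <;> omega

theorem update_hookP_zero (p q : ℕ) :
    update (hookP p q) 0 (hookP p q 0 + 1) = hookP (p + 1) q := by
  funext j; simp only [update_apply, hookP]; split_ifs <;> omega

theorem update_hookP_succ (p q : ℕ) :
    update (hookP p q) (q + 1) (hookP p q (q + 1) + 1) = hookP p (q + 1) := by
  funext j; simp only [update_apply, hookP, Nat.add_one_ne_zero, if_false]; split_ifs <;> omega

theorem sum_mul_schurNumerator_zero (hn : 0 < n) :
    (∑ i, z i) * schurNumerator z 0
      = schurNumerator z (hookP 0 0)
        + (∑ j ∈ range n, ((n - 1 - j : ℕ) : R)) * schurNumerator z 0 := by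
  have hbump : update (0 : ℕ → ℕ) 0 (0 + 1) = hookP 0 0 := by
    funext j; simp only [update_apply, hookP, Pi.zero_apply]; split_ifs <;> omega
  rw [sum_mul_schurNumerator z 0 {0} (by simpa using hn) fun j _ hj =>
    ⟨by simpa [Nat.pos_iff_ne_zero] using hj, rfl⟩]
  simp [hbump]

theorem sum_mul_schurNumerator_hookP_zero (p : ℕ) (hn : 2 ≤ n) :
    (∑ i, z i) * schurNumerator z (hookP p 0)
      = schurNumerator z (hookP (p + 1) 0) + schurNumerator z (hookP p 1)
        + (p + 1 + ∑ j ∈ range n, ((n - 1 - j : ℕ) : R)) * schurNumerator z (hookP p 0) := by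
  have hrow1 : update (hookP p 0) 1 (hookP p 0 1 + 1) = hookP p 1 := update_hookP_succ p 0
  rw [sum_mul_schurNumerator z (hookP p 0) {0, 1}
      (by intro j; simp only [Finset.mem_insert, Finset.mem_singleton, Finset.mem_range]; omega)
      fun j hj hjS => by
        simp only [Finset.mem_insert, Finset.mem_singleton, Finset.mem_range] at hj hjS
        simp only [hookP]; split_ifs <;> omega,
    Finset.sum_pair zero_ne_one, update_hookP_zero, hrow1, ← Nat.cast_sum,
    sum_range_hookP p (by omega)]
  push_cast
  ring

theorem sum_mul_schurNumerator_hookP (p : ℕ) {q : ℕ} (hq : 0 < q) (hn : q + 2 ≤ n) :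
    (∑ i, z i) * schurNumerator z (hookP p q)
      = schurNumerator z (hookP (p + 1) q) + schurNumerator z (update (hookP p q) 1 2)
        + schurNumerator z (hookP p (q + 1))
        + (p + q + 1 + ∑ j ∈ range n, ((n - 1 - j : ℕ) : R))
          * schurNumerator z (hookP p q) := by
  have hrow1 : hookP p q 1 + 1 = 2 := by simp [hookP, Nat.one_le_iff_ne_zero.mpr hq.ne']
  rw [sum_mul_schurNumerator z (hookP p q) {0, 1, q + 1}
      (by intro j; simp only [Finset.mem_insert, Finset.mem_singleton, Finset.mem_range]; omega)
      fun j hj hjS => by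
        simp only [Finset.mem_insert, Finset.mem_singleton, Finset.mem_range] at hj hjS
        simp only [hookP]; split_ifs <;> omega,
    Finset.sum_insert (by simp), Finset.sum_pair (by omega), update_hookP_zero, hrow1,
    update_hookP_succ, ← Nat.cast_sum, sum_range_hookP p (by omega)]
  push_cast
  ring

/-- The Giambelli identity for `(p + 1, 2, 1^(q-1)) = (p, 0 | q, 0)`: the Plücker relation for
the exponents `n + p, n, n - 1, …, n - q, n - q - 2, …, 0` against the staircase `δ`. -/
theorem schurNumerator_giambelli (p : ℕ) {q : ℕ} (hq : 0 < q) (hn : q + 2 ≤ n) :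
    schurNumerator z (hookP 0 q) * schurNumerator z (hookP p 0)
      - schurNumerator z (hookP p q) * schurNumerator z (hookP 0 0)
      + schurNumerator z (update (hookP p q) 1 2) * schurNumerator z 0 = 0 := by
  let g : ℕ → ℕ := fun k => if k = 0 then n + p else if k ≤ q + 1 then n + 1 - k else n - k
  let δ : ℕ → ℕ := fun j => n - 1 - j
  have hvanish : ∀ k ∈ range (n + 1), k ∉ ({0, 1, 2} : Finset ℕ) →
      (-1) ^ k * ffAlternant z (fun j => g (if j < k then j else j + 1))
        * ffAlternant z (update δ 0 (g k)) = 0 := by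
    intro k hk hkS
    simp only [Finset.mem_insert, Finset.mem_singleton, Finset.mem_range] at hk hkS
    rw [ffAlternant_eq_zero_of_eq z (e := update δ 0 (g k)) (j := 0)
      (j' := if k ≤ q + 1 then k - 2 else k - 1) (by omega) (by grind) (by grind)
      (by grind [update_apply]), mul_zero]
  have hGP := sum_ffAlternant_succAbove z g δ (r := 0) (by omega)
  rw [← Finset.sum_subset
      (by intro k; simp only [Finset.mem_insert, Finset.mem_singleton, Finset.mem_range]; omega)
      hvanish, Finset.sum_insert (by simp), Finset.sum_pair (by omega)] at hGP
  have e0 : ffAlternant z (fun j => g (if j < 0 then j else j + 1))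
      = schurNumerator z (hookP 0 q) := by
    unfold schurNumerator; congr 1; funext j; grind [hookP]
  have e1 : ffAlternant z (fun j => g (if j < 1 then j else j + 1))
      = schurNumerator z (hookP p q) := by
    unfold schurNumerator; congr 1; funext j; grind [hookP]
  have e2 : ffAlternant z (fun j => g (if j < 2 then j else j + 1))
      = schurNumerator z (update (hookP p q) 1 2) := by
    unfold schurNumerator; congr 1; funext j; grind [hookP]
  have f0 : ffAlternant z (update δ 0 (g 0)) = schurNumerator z (hookP p 0) := by
    unfold schurNumerator; congr 1; funext j; grind [hookP, update_apply]
  have f1 : ffAlternant z (update δ 0 (g 1)) = schurNumerator z (hookP 0 0) := by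
    unfold schurNumerator; congr 1; funext j; grind [hookP, update_apply]
  have f2 : ffAlternant z (update δ 0 (g 2)) = schurNumerator z 0 := by
    unfold schurNumerator; congr 1; funext j; simp only [update_apply, Pi.zero_apply]; grind
  rw [e0, e1, e2, f0, f1, f2] at hGP
  linear_combination hGP

theorem schurNumerator_hook_relation (p q : ℕ) (hn : p + q + 2 ≤ n) :
    (schurNumerator z (hookP (p + 1) q) + schurNumerator z (hookP p (q + 1))
        + (p + q + 1) * schurNumerator z (hookP p q)) * schurNumerator z 0
      = schurNumerator z (hookP p 0) * schurNumerator z (hookP 0 q) := by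
  have hδ := sum_mul_schurNumerator_zero z (by omega)
  rcases Nat.eq_zero_or_pos q with rfl | hq
  · have hp0 := sum_mul_schurNumerator_hookP_zero z p (by omega)
    push_cast
    linear_combination schurNumerator z (hookP p 0) * hδ - schurNumerator z 0 * hp0
  · have hpq := sum_mul_schurNumerator_hookP z p hq (by omega)
    have hG := schurNumerator_giambelli z p hq (by omega)
    linear_combination schurNumerator z (hookP p q) * hδ - schurNumerator z 0 * hpq - hG

end SchurNumerator

section ShiftedVariables

open MvPolynomial

variable {n : ℕ}

/-- `z_i = x_i + n - i` in the paper's 1-based indexing. -/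
def shiftedX (n : ℕ) (i : Fin n) : MvPolynomial (Fin n) ℚ := X i + C ((n : ℚ) - 1 - (i : ℕ))

theorem shiftedX_injective : Injective (shiftedX n) := by
  intro a b hab
  have h := congrArg (pderiv a) hab
  simp only [shiftedX, map_add, pderiv_C, add_zero, pderiv_X, Pi.single_eq_same] at h
  by_contra hne
  simp [Pi.single_eq_of_ne' hne] at h

theorem sstarFrac_eq_div (μ : ℕ → ℕ) :
    sstarFrac n μ = algebraMap _ _ (schurNumerator (shiftedX n) μ)
      / algebraMap _ _ (schurNumerator (shiftedX n) 0) := by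
  simp only [sstarFrac, schurNumerator, ffAlternant, ffMatrix, ffpoly,
    descPochhammer_eval_eq_prod_range, shiftedX, Pi.zero_apply, zero_add]

end ShiftedVariables

/-- For all `p, q ≥ 0` and `n ≥ p + q + 2`, the identity of
(rational functions which are in fact) polynomials in `x₁,…,xₙ`:
`s*_{(p+1|q)} + s*_{(p|q+1)} + (p+q+1)·s*_{(p|q)} = s*_{(p|0)} · s*_{(0|q)}`. -/
theorem shifted_schur_hook_relation
    (p q n : ℕ) (hn : p + q + 2 ≤ n) :
    sstarFrac n (hookP (p + 1) q) + sstarFrac n (hookP p (q + 1)) +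
        ((p : FractionRing (MvPolynomial (Fin n) ℚ)) + (q : ℕ) + 1) * sstarFrac n (hookP p q) =
      sstarFrac n (hookP p 0) * sstarFrac n (hookP 0 q) := by
  have hδ : algebraMap _ (FractionRing (MvPolynomial (Fin n) ℚ))
      (schurNumerator (shiftedX n) 0) ≠ 0 :=
    (map_ne_zero_iff _ (IsFractionRing.injective _ _)).mpr
      (schurNumerator_zero_ne_zero shiftedX_injective)
  have hrel := congrArg (algebraMap _ (FractionRing (MvPolynomial (Fin n) ℚ)))
    (schurNumerator_hook_relation (shiftedX n) p q hn)
  simp only [map_mul, map_add, map_natCast, map_one] at hrel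
  simp only [sstarFrac_eq_div]
  field_simp
  linear_combination hrel

end
end

section
/- Let (aᵢ)_{i≥1} and (bᵢ)_{i≥1} be sequences of complex numbers and let p' ≥ 0 be an integer.is Then the following identity of formal power series in t holds: t^{p'+1} / ∏_{i=1}^{p'+1}(1−bᵢt) = Σ_{p=p'}^{∞} h_{p−p'}(b₁,…,b_{p'+1}; −a₁,…,−a_p) · t^{p+1} / ∏_{i=1}^{p+1}(1−aᵢt). (Equivalently, with u = 1/t: 1/((u−b₁)⋯(u−b_{p'+1})) = Σ_{p≥p'} h_{p−p'}(b₁,…,b_{p'+1}; −a₁,…,−a_p) / ((u−a₁)⋯(u−a_{p+1})).) -/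
open Finset

noncomputable section

/-- value of the elementary symmetric polynomial `e_k` at `c₁,…,c_m` -/
def esymmVal {m : ℕ} (c : Fin m → ℂ) (k : ℕ) : ℂ :=
  ∑ s ∈ (Finset.univ : Finset (Fin m)).powersetCard k, ∏ i ∈ s, c i

/-- value of the complete homogeneous symmetric polynomial `h_k` at `c₁,…,c_m` -/
def hsymmVal {m : ℕ} (c : Fin m → ℂ) (k : ℕ) : ℂ :=
  ∑ s : Sym (Fin m) k, ((s : Multiset (Fin m)).map c).prod

/-- value of the supersymmetric complete homogeneous polynomial
`h_k(x₁,…,x_{m₁}; y₁,…,y_{m₂}) = ∑_{r=0}^{k} h_r(x)·e_{k-r}(y)` -/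
def sshVal (k : ℕ) {m₁ m₂ : ℕ} (xv : Fin m₁ → ℂ) (yv : Fin m₂ → ℂ) : ℂ :=
  ∑ r ∈ Finset.range (k + 1), hsymmVal xv r * esymmVal yv (k - r)

/-!
Write `A_p = ∏_{i<p} (1 - a_{i+1} t)`. Every power series `g` expands as
`g = ∑_p [tᵖ](A_p g) · tᵖ / A_{p+1}`: the remainder after `P` terms is `t^P · r / A_P`, and
multiplying `r` by the next factor `1 - a_{P+1} t` splits off its constant term, which is the next
coefficient. For `g = t^{p'} / B` with `B = ∏_{i ≤ p'} (1 - bᵢ t)` the coefficients are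
`[t^{p-p'}](A_p / B)`, which is `h_{p-p'}(b; -a)` because `A_p` generates the `e_k(-a)` and `1 / B`
the `h_k(b)`. Multiplying by `t` gives the identity.
-/

namespace PowerSeries

variable {R : Type*} [CommRing R]

def denomProd (c : ℕ → R) (k : ℕ) : R⟦X⟧ :=
  ∏ i ∈ range k, (1 - C (c i) * X)

theorem denomProd_mul_denomInv (c : ℕ → R) (k : ℕ) : denomProd c k * denomInv R c k = 1 :=
  mul_invOfUnit _ _ <| by simp [denomProd, map_prod]

theorem denomInv_eq_one_sub_mul_denomInv_succ (c : ℕ → R) (k : ℕ) :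
    denomInv R c k = (1 - C (c k) * X) * denomInv R c (k + 1) := by
  have h := denomProd_mul_denomInv c (k + 1)
  rw [denomProd, prod_range_succ, mul_assoc] at h
  exact left_inv_eq_right_inv (by rw [mul_comm]; exact denomProd_mul_denomInv c k) h

theorem mk_pow_mul_one_sub_C_mul_X (c : R) : mk (c ^ ·) * (1 - C c * X) = 1 := by
  simpa [rescale_mk] using congrArg (rescale c) (mk_one_mul_one_sub_eq_one R)

theorem denomInv_eq_prod_mk_pow (c : ℕ → R) (k : ℕ) :
    denomInv R c k = ∏ i ∈ range k, mk (c i ^ ·) := by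
  refine left_inv_eq_right_inv (a := denomProd c k) ?_ ?_
  · rw [mul_comm]; exact denomProd_mul_denomInv c k
  · rw [denomProd, ← prod_mul_distrib]
    simp [mul_comm _ (mk _), mk_pow_mul_one_sub_C_mul_X]

def coeffShift (m : ℕ) (φ : R⟦X⟧) : R⟦X⟧ :=
  mk fun n => coeff (n + m) φ

theorem coeffShift_zero (φ : R⟦X⟧) : coeffShift 0 φ = φ := by
  ext n; simp [coeffShift]

theorem coeffShift_mul_one_sub_C_mul_X (m : ℕ) (φ : R⟦X⟧) (c : R) :
    coeffShift m φ * (1 - C c * X) =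
      C (coeff m φ) + X * coeffShift (m + 1) (φ * (1 - C c * X)) := by
  ext (_ | n)
  · simp [coeffShift]
  · simp [coeffShift, mul_sub, ← mul_assoc, ← add_assoc, coeff_succ_mul_X,
      add_right_comm n 1 m]

-- Newton-type expansion of `g` in the basis `Xᵖ / ∏_{i ≤ p} (1 - cᵢ X)`.
theorem eq_sum_C_mul_X_pow_mul_denomInv_add (c : ℕ → R) (g : R⟦X⟧) (P : ℕ) :
    g = ∑ p ∈ range P, C (coeff p (denomProd c p * g)) * X ^ p * denomInv R c (p + 1) +
      X ^ P * coeffShift P (denomProd c P * g) * denomInv R c P := by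
  induction P with
  | zero =>
    have : denomInv R c 0 = 1 := by simpa [denomProd] using denomProd_mul_denomInv c 0
    simp [coeffShift_zero, denomProd, this]
  | succ P ih =>
    have hprod : denomProd c (P + 1) * g = denomProd c P * g * (1 - C (c P) * X) := by
      rw [denomProd, prod_range_succ, ← denomProd]; ring
    rw [sum_range_succ, add_assoc]
    conv_lhs => rw [ih]
    congr 1
    rw [denomInv_eq_one_sub_mul_denomInv_succ c P]
    calc X ^ P * coeffShift P (denomProd c P * g) * ((1 - C (c P) * X) * denomInv R c (P + 1))
        = X ^ P * (coeffShift P (denomProd c P * g) * (1 - C (c P) * X)) *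
            denomInv R c (P + 1) := by ring
      _ = _ := by rw [coeffShift_mul_one_sub_C_mul_X, hprod]; ring

theorem coeff_eq_sum_coeff_denomProd_mul (c : ℕ → R) (g : R⟦X⟧) (n : ℕ) :
    coeff n g = ∑ p ∈ range (n + 1),
      coeff p (denomProd c p * g) * coeff (n - p) (denomInv R c (p + 1)) := by
  conv_lhs => rw [eq_sum_C_mul_X_pow_mul_denomInv_add c g (n + 1)]
  rw [map_add, map_sum, mul_assoc, coeff_X_pow_mul', if_neg (by omega), add_zero]
  refine sum_congr rfl fun p hp => ?_
  rw [mul_assoc, coeff_C_mul, coeff_X_pow_mul', if_pos (by simpa [Nat.lt_succ_iff] using hp)]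

theorem coeff_denomProd (c : ℕ → ℂ) (m k : ℕ) :
    coeff k (denomProd c m) = esymmVal (fun i : Fin m => -c i) k := by
  have h : denomProd c m = ∏ i : Fin m, (1 + C (-c i) * X) := by
    rw [denomProd, ← Fin.prod_univ_eq_prod_range (fun i => 1 - C (c i) * X)]
    simp [sub_eq_add_neg]
  rw [h, prod_one_add, esymmVal, powersetCard_eq_filter, sum_filter, map_sum]
  refine sum_congr rfl fun t _ => ?_
  rw [prod_mul_distrib, prod_const, ← map_prod, coeff_C_mul_X_pow]
  exact if_congr eq_comm rfl rfl

theorem coeff_denomInv (c : ℕ → ℂ) (k j : ℕ) :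
    coeff j (denomInv ℂ c k) = hsymmVal (fun i : Fin k => c i) j := by
  rw [denomInv_eq_prod_mk_pow, ← Fin.prod_univ_eq_prod_range (fun i => mk (c i ^ ·)), coeff_prod,
    hsymmVal]
  refine sum_bij' (fun l hl => ⟨Finsupp.toMultiset l, ?_⟩) (fun s _ => Multiset.toFinsupp s)
    (fun _ _ => mem_univ _) (fun s _ => ?_) (fun l _ => by simp) (fun s _ => Subtype.ext (by simp))
    (fun l _ => ?_)
  · simpa [Finsupp.card_toMultiset, Finsupp.sum_fintype] using (mem_finsuppAntidiag.1 hl).1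
  · refine mem_finsuppAntidiag.2 ⟨?_, subset_univ _⟩
    exact (Multiset.sum_count_eq_card fun _ _ => mem_univ _).trans s.2
  · simp [Finsupp.toMultiset_map, Finsupp.prod_toMultiset, Finsupp.prod_mapDomain_index,
      pow_add, Finsupp.prod_fintype]

theorem coeff_denomProd_mul_denomInv (c d : ℕ → ℂ) (m n k : ℕ) :
    coeff k (denomProd c m * denomInv ℂ d n) =
      sshVal k (fun i : Fin n => d i) (fun i : Fin m => -c i) := by
  rw [mul_comm, coeff_mul, Nat.sum_antidiagonal_eq_sum_range_succ_mk, sshVal]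
  simp only [coeff_denomInv, coeff_denomProd]

end PowerSeries

open PowerSeries

/-- For sequences `(aᵢ)_{i≥1}`, `(bᵢ)_{i≥1}` in `ℂ` and `p' ≥ 0`, the identity
of formal power series in `t`:
`t^{p'+1}/∏_{i=1}^{p'+1}(1-bᵢt) = ∑_{p≥p'} h_{p-p'}(b₁,…,b_{p'+1}; -a₁,…,-a_p)·t^{p+1}/∏_{i=1}^{p+1}(1-aᵢt)`
(the right-hand side written coefficientwise). -/
theorem expansion_lemma
    (a b : ℕ → ℂ) (p' : ℕ) :
    PowerSeries.X ^ (p' + 1) * denomInv ℂ (fun i => b (i + 1)) (p' + 1) =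
      PowerSeries.mk (fun N =>
        ∑ p ∈ Finset.Ico p' N,
          sshVal (p - p') (fun i : Fin (p' + 1) => b ((i : ℕ) + 1))
              (fun i : Fin p => -a ((i : ℕ) + 1)) *
            PowerSeries.coeff (R := ℂ) (N - (p + 1)) (denomInv ℂ (fun i => a (i + 1)) (p + 1))) := by
  ext (_ | n)
  · simp [coeff_X_pow_mul']
  have hcoeff (p : ℕ) : coeff p (denomProd (fun i => a (i + 1)) p *
      (X ^ p' * denomInv ℂ (fun i => b (i + 1)) (p' + 1))) =
        if p' ≤ p then sshVal (p - p') (fun i : Fin (p' + 1) => b ((i : ℕ) + 1))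
          (fun i : Fin p => -a ((i : ℕ) + 1)) else 0 := by
    rw [mul_left_comm, coeff_X_pow_mul', coeff_denomProd_mul_denomInv]
  have hIco : Ico p' (n + 1) = (range (n + 1)).filter (p' ≤ ·) := by
    ext p; simp [and_comm]
  rw [coeff_mk, pow_succ', mul_assoc, coeff_succ_X_mul,
    coeff_eq_sum_coeff_denomProd_mul (fun i => a (i + 1))]
  simp only [hcoeff, ite_mul, zero_mul, ← sum_filter, hIco, Nat.add_sub_add_right]

end
end
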